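/- Suppose γ = (I, γ_{τ(x)}, γ_{(x)}) ∈ D_𝒢(A) satisfies: (C1) I_{τ_y⁻¹} = I_x and I_{τ_y} = I_y for all objects y; (C2) I_x is unital and γ_{(x)} admits a globalization (J_x, γ̃_{(x)}); (C3) there are a ring B, ideals {J_y}_{y∈𝒢₀} of B, and ring isomorphisms γ̃_{τ_y} : J_x → J_y with I_y an ideal of J_y and γ̃_{τ_y}|_{I_x} = γ_{τ_y}. Then β = (C_g, β_g)_{g∈𝒢} with C_g = J_{t(g)} and β_g = γ̃_{τ_{t(g)}} ∘ γ̃_{g_x} ∘ γ̃_{τ_{s(g)}}⁻¹ : J_{s(g)} → J_{t(g)} is a global action of 𝒢 on B which is a globalization of θ = Ext(γ). -/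

import Mathlib

open CategoryTheory

universe u v

def IsIdealIn {A : Type u} [NonUnitalRing A] (S T : Set A) : Prop :=
  S ⊆ T ∧ (0 : A) ∈ S ∧ (∀ a ∈ S, ∀ b ∈ S, a + b ∈ S) ∧ (∀ a ∈ S, -a ∈ S) ∧
    ∀ t ∈ T, ∀ s ∈ S, t * s ∈ S ∧ s * t ∈ S

structure PartialAction (G : Type v) [Groupoid G] (A : Type u) [NonUnitalRing A] where
  D : ∀ {x y : G}, (x ⟶ y) → Set A
  act : ∀ {x y : G}, (x ⟶ y) → A → A
  ideal_base : ∀ y : G, IsIdealIn (D (𝟙 y)) Set.univ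
  ideal_dom : ∀ {x y : G} (g : x ⟶ y), IsIdealIn (D g) (D (𝟙 y))
  act_mem : ∀ {x y : G} (g : x ⟶ y), ∀ a ∈ D (Groupoid.inv g), act g a ∈ D g
  act_add : ∀ {x y : G} (g : x ⟶ y), ∀ a ∈ D (Groupoid.inv g), ∀ b ∈ D (Groupoid.inv g),
    act g (a + b) = act g a + act g b
  act_mul : ∀ {x y : G} (g : x ⟶ y), ∀ a ∈ D (Groupoid.inv g), ∀ b ∈ D (Groupoid.inv g),
    act g (a * b) = act g a * act g b
  act_inj : ∀ {x y : G} (g : x ⟶ y), ∀ a ∈ D (Groupoid.inv g), ∀ b ∈ D (Groupoid.inv g),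
    act g a = act g b → a = b
  act_surj : ∀ {x y : G} (g : x ⟶ y), ∀ c ∈ D g, ∃ a ∈ D (Groupoid.inv g), act g a = c
  act_id : ∀ y : G, ∀ a ∈ D (𝟙 y), act (𝟙 y) a = a
  mem_comp : ∀ {w x y : G} (g : x ⟶ y) (h : w ⟶ x), ∀ a ∈ D (Groupoid.inv h),
    act h a ∈ D (Groupoid.inv g) ∩ D h → a ∈ D (Groupoid.inv (h ≫ g))
  act_comp : ∀ {w x y : G} (g : x ⟶ y) (h : w ⟶ x), ∀ a ∈ D (Groupoid.inv h),
    act h a ∈ D (Groupoid.inv g) ∩ D h → act g (act h a) = act (h ≫ g) a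

def IsId {G : Type v} [Groupoid G] {y z : G} (g : y ⟶ z) : Prop :=
  ∃ h : y = z, g = eqToHom h

/-
The global action is the action of the vertex group 𝒢(x) on J_x transported along the
isomorphisms γ̃_{τ_y} : J_x ≅ J_y; it is a global action because g ↦ g_x = τ_{t(g)}⁻¹ g τ_{s(g)}
is a functor 𝒢 → 𝒢(x). It globalizes θ because the arrows τ_y are total for θ by (C1), so θ
itself factors as θ_g = θ_{τ_{t(g)}} θ_{g_x} θ_{τ_{s(g)}}⁻¹ with matching domains, while
γ̃_{τ_y} restricts to the bijection θ_{τ_y} : I_x → I_y. The range and density conditions for β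
are then transported from those of the globalization (J_x, γ̃_{(x)}).
-/

namespace IsIdealIn

variable {A : Type u} [NonUnitalRing A] {S T : Set A}

theorem add_mem (h : IsIdealIn S T) {a b : A} (ha : a ∈ S) (hb : b ∈ S) : a + b ∈ S :=
  h.2.2.1 a ha b hb

theorem mul_mem (h : IsIdealIn S T) {a b : A} (ha : a ∈ S) (hb : b ∈ S) : a * b ∈ S :=
  (h.2.2.2.2 a (h.1 ha) b hb).1

theorem mono (h : IsIdealIn S T) {T' : Set A} (hS : S ⊆ T') (hT : T' ⊆ T) : IsIdealIn S T' :=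
  ⟨hS, h.2.1, h.2.2.1, h.2.2.2.1, fun t ht s hs => h.2.2.2.2 t (hT ht) s hs⟩

def toAddSubgroup (h : IsIdealIn S T) : AddSubgroup A where
  carrier := S
  add_mem' := h.add_mem
  zero_mem' := h.2.1
  neg_mem' := h.2.2.2.1 _

end IsIdealIn

theorem AddSubgroup.image_closure_subset_closure_image {M N : Type*} [AddGroup M] [AddGroup N]
    {f : M → N} {s : Set M}
    (hf : ∀ a ∈ closure s, ∀ b ∈ closure s, f (a + b) = f a + f b) :
    f '' closure s ⊆ closure (f '' s) := by
  have map_zero : f 0 = 0 := by simpa using hf 0 (zero_mem _) 0 (zero_mem _)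
  rintro _ ⟨a, ha, rfl⟩
  induction ha using closure_induction with
  | mem a ha => exact subset_closure ⟨a, ha, rfl⟩
  | zero => rw [map_zero]; exact zero_mem _
  | add a b ha hb iha ihb => rw [hf a ha b hb]; exact add_mem iha ihb
  | neg a ha iha =>
    have hsum := hf a ha (-a) (neg_mem ha)
    rw [add_neg_cancel, map_zero] at hsum
    rw [← neg_eq_of_add_eq_zero_right hsum.symm]
    exact neg_mem iha

def IsRingHomOn {α β : Type*} [Add α] [Mul α] [Add β] [Mul β] (f : α → β) (s : Set α) : Prop :=
  ∀ a ∈ s, ∀ b ∈ s, f (a + b) = f a + f b ∧ f (a * b) = f a * f b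

namespace IsRingHomOn

variable {α β γ : Type*} [Add α] [Mul α] [Add β] [Mul β] [Add γ] [Mul γ]

theorem comp {f : β → γ} {g : α → β} {s : Set α} {t : Set β} (hf : IsRingHomOn f t)
    (hg : IsRingHomOn g s) (hgst : Set.MapsTo g s t) : IsRingHomOn (f ∘ g) s := by
  intro a ha b hb
  simp only [Function.comp_apply, (hg a ha b hb).1, (hg a ha b hb).2]
  exact hf _ (hgst ha) _ (hgst hb)

theorem of_invOn {f : α → β} {f' : β → α} {s : Set α} {t : Set β} (hf : IsRingHomOn f s)
    (hinv : Set.InvOn f' f s t) (hf' : Set.MapsTo f' t s)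
    (hadd : ∀ a ∈ s, ∀ b ∈ s, a + b ∈ s) (hmul : ∀ a ∈ s, ∀ b ∈ s, a * b ∈ s) :
    IsRingHomOn f' t := by
  intro a ha b hb
  obtain ⟨hf_add, hf_mul⟩ := hf _ (hf' ha) _ (hf' hb)
  rw [hinv.2.eq ha, hinv.2.eq hb] at hf_add hf_mul
  rw [← hf_add, ← hf_mul, hinv.1.eq (hadd _ (hf' ha) _ (hf' hb)),
    hinv.1.eq (hmul _ (hf' ha) _ (hf' hb))]
  exact ⟨rfl, rfl⟩

end IsRingHomOn

namespace PartialAction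

variable {G : Type v} [Groupoid G] {A : Type u} [NonUnitalRing A] (θ : PartialAction G A)

theorem D_subset {y z : G} (g : y ⟶ z) : θ.D g ⊆ θ.D (𝟙 z) :=
  (θ.ideal_dom g).1

theorem act_inv_act {y z : G} {g : y ⟶ z} {a : A} (ha : a ∈ θ.D (Groupoid.inv g)) :
    θ.act (Groupoid.inv g) (θ.act g a) = a := by
  have hga : θ.act g a ∈ θ.D (Groupoid.inv (Groupoid.inv g)) := by
    simpa using θ.act_mem g a ha
  rw [θ.act_comp _ g a ha ⟨hga, θ.act_mem g a ha⟩, Groupoid.comp_inv]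
  exact θ.act_id y a (θ.D_subset _ ha)

theorem act_mem_D_inv_iff {w y z : G} {h : w ⟶ y} (g : y ⟶ z) {a : A}
    (ha : a ∈ θ.D (Groupoid.inv h)) :
    θ.act h a ∈ θ.D (Groupoid.inv g) ↔ a ∈ θ.D (Groupoid.inv (h ≫ g)) := by
  refine ⟨fun hb => θ.mem_comp g h a ha ⟨hb, θ.act_mem h a ha⟩, fun hhg => ?_⟩
  have hb : θ.act h a ∈ θ.D (Groupoid.inv (Groupoid.inv h)) := by
    simpa using θ.act_mem h a ha
  simpa using θ.mem_comp (h ≫ g) (Groupoid.inv h) _ hb (by rw [θ.act_inv_act ha]; exact ⟨hhg, ha⟩)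

theorem act_act {w y z : G} {h : w ⟶ y} {g : y ⟶ z} {a : A} (ha : a ∈ θ.D (Groupoid.inv h))
    (hb : θ.act h a ∈ θ.D (Groupoid.inv g)) : θ.act g (θ.act h a) = θ.act (h ≫ g) a :=
  θ.act_comp g h a ha ⟨hb, θ.act_mem h a ha⟩

def IsTotal {y z : G} (h : y ⟶ z) : Prop :=
  θ.D h = θ.D (𝟙 z) ∧ θ.D (Groupoid.inv h) = θ.D (𝟙 y)

variable {θ}

namespace IsTotal

variable {y z : G} {h : y ⟶ z}

theorem inv (hh : θ.IsTotal h) : θ.IsTotal (Groupoid.inv h) :=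
  ⟨hh.2, by simpa using hh.1⟩

theorem act_mem_D_inv (hh : θ.IsTotal h) {w : G} (k : w ⟶ y) {a : A}
    (ha : a ∈ θ.D (Groupoid.inv k)) : θ.act k a ∈ θ.D (Groupoid.inv h) :=
  hh.2 ▸ θ.D_subset k (θ.act_mem k a ha)

theorem act_mem (hh : θ.IsTotal h) {a : A} (ha : a ∈ θ.D (𝟙 y)) : θ.act h a ∈ θ.D (𝟙 z) :=
  hh.1 ▸ θ.act_mem h a (hh.2 ▸ ha)

theorem exists_act_eq (hh : θ.IsTotal h) {a : A} (ha : a ∈ θ.D (𝟙 z)) :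
    ∃ c ∈ θ.D (𝟙 y), θ.act h c = a := by
  obtain ⟨c, hc, rfl⟩ := θ.act_surj h a (hh.1 ▸ ha)
  exact ⟨c, hh.2 ▸ hc, rfl⟩

theorem D_inv_comp (hh : θ.IsTotal h) {w : G} (k : w ⟶ y) :
    θ.D (Groupoid.inv (k ≫ h)) = θ.D (Groupoid.inv k) := by
  ext a
  refine ⟨fun ha => ?_, fun ha => (θ.act_mem_D_inv_iff h ha).1 (hh.act_mem_D_inv k ha)⟩
  simpa using (θ.act_mem_D_inv_iff (Groupoid.inv h) ha).1 (hh.inv.act_mem_D_inv (k ≫ h) ha)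

end IsTotal

section Conjugation

variable {x y z : G} {p : x ⟶ y} {q : x ⟶ z}

theorem act_mem_D_inv_iff_conj (hp : θ.IsTotal p) (hq : θ.IsTotal q) (g : y ⟶ z) {c : A}
    (hc : c ∈ θ.D (𝟙 x)) :
    θ.act p c ∈ θ.D (Groupoid.inv g) ↔ c ∈ θ.D (Groupoid.inv (p ≫ g ≫ Groupoid.inv q)) := by
  rw [θ.act_mem_D_inv_iff g (hp.2 ▸ hc), ← hq.D_inv_comp]
  simp

theorem act_act_conj (hp : θ.IsTotal p) (hq : θ.IsTotal q) (g : y ⟶ z) {c : A}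
    (hc : c ∈ θ.D (Groupoid.inv (p ≫ g ≫ Groupoid.inv q))) :
    θ.act g (θ.act p c) = θ.act q (θ.act (p ≫ g ≫ Groupoid.inv q) c) := by
  have hcx : c ∈ θ.D (𝟙 x) := θ.D_subset _ hc
  rw [θ.act_act (hp.2 ▸ hcx) ((act_mem_D_inv_iff_conj hp hq g hcx).2 hc),
    θ.act_act hc (hq.act_mem_D_inv _ hc)]
  simp

end Conjugation

end PartialAction

/-- A global action `act` of the vertex group `𝒢(x)` on `J x` (the paper's `γ̃_{(x)}`) together
with isomorphisms `tr y : J x → J y` (the paper's `γ̃_{τ_y}`). -/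
structure TransportedVertexAction (G : Type v) [Groupoid G] (B : Type u) [NonUnitalRing B]
    (x : G) where
  J : G → Set B
  J_ideal : ∀ y, IsIdealIn (J y) Set.univ
  τ : ∀ y, x ⟶ y
  act : (x ⟶ x) → B → B
  act_mapsTo : ∀ h, Set.MapsTo (act h) (J x) (J x)
  act_ringHomOn : ∀ h, IsRingHomOn (act h) (J x)
  act_id : ∀ b ∈ J x, act (𝟙 x) b = b
  act_comp : ∀ g h, ∀ b ∈ J x, act g (act h b) = act (h ≫ g) b
  tr : G → B → B
  trInv : G → B → B
  tr_mapsTo : ∀ y, Set.MapsTo (tr y) (J x) (J y)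
  trInv_mapsTo : ∀ y, Set.MapsTo (trInv y) (J y) (J x)
  tr_ringHomOn : ∀ y, IsRingHomOn (tr y) (J x)
  tr_invOn : ∀ y, Set.InvOn (trInv y) (tr y) (J x) (J y)

namespace TransportedVertexAction

variable {G : Type v} [Groupoid G] {B : Type u} [NonUnitalRing B] {x : G}
  (T : TransportedVertexAction G B x)

theorem act_invOn (h : x ⟶ x) : Set.InvOn (T.act (Groupoid.inv h)) (T.act h) (T.J x) (T.J x) :=
  ⟨fun b hb => by rw [T.act_comp _ _ b hb, Groupoid.comp_inv, T.act_id b hb],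
    fun b hb => by rw [T.act_comp _ _ b hb, Groupoid.inv_comp, T.act_id b hb]⟩

theorem act_bijOn (h : x ⟶ x) : Set.BijOn (T.act h) (T.J x) (T.J x) :=
  (T.act_invOn h).bijOn (T.act_mapsTo h) (T.act_mapsTo _)

theorem tr_bijOn (y : G) : Set.BijOn (T.tr y) (T.J x) (T.J y) :=
  (T.tr_invOn y).bijOn (T.tr_mapsTo y) (T.trInv_mapsTo y)

theorem trInv_ringHomOn (y : G) : IsRingHomOn (T.trInv y) (T.J y) :=
  (T.tr_ringHomOn y).of_invOn (T.tr_invOn y) (T.trInv_mapsTo y)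
    (fun _ ha _ hb => (T.J_ideal x).add_mem ha hb) (fun _ ha _ hb => (T.J_ideal x).mul_mem ha hb)

def arrowAct {y z : G} (g : y ⟶ z) : B → B :=
  T.tr z ∘ T.act (T.τ y ≫ g ≫ Groupoid.inv (T.τ z)) ∘ T.trInv y

theorem arrowAct_apply {y z : G} (g : y ⟶ z) (b : B) :
    T.arrowAct g b = T.tr z (T.act (T.τ y ≫ g ≫ Groupoid.inv (T.τ z)) (T.trInv y b)) :=
  rfl

theorem arrowAct_bijOn {y z : G} (g : y ⟶ z) : Set.BijOn (T.arrowAct g) (T.J y) (T.J z) :=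
  (T.tr_bijOn z).comp ((T.act_bijOn _).comp
    ((T.tr_invOn y).symm.bijOn (T.trInv_mapsTo y) (T.tr_mapsTo y)))

theorem arrowAct_ringHomOn {y z : G} (g : y ⟶ z) : IsRingHomOn (T.arrowAct g) (T.J y) :=
  (T.tr_ringHomOn z).comp ((T.act_ringHomOn _).comp (T.trInv_ringHomOn y) (T.trInv_mapsTo y))
    ((T.act_mapsTo _).comp (T.trInv_mapsTo y))

theorem arrowAct_id (z : G) {b : B} (hb : b ∈ T.J z) : T.arrowAct (𝟙 z) b = b := by
  rw [arrowAct_apply, Category.id_comp, Groupoid.comp_inv, T.act_id _ (T.trInv_mapsTo z hb),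
    (T.tr_invOn z).2.eq hb]

theorem arrowAct_comp {w y z : G} (h : w ⟶ y) (g : y ⟶ z) {b : B} (hb : b ∈ T.J w) :
    T.arrowAct g (T.arrowAct h b) = T.arrowAct (h ≫ g) b := by
  have hb' := T.trInv_mapsTo w hb
  simp only [arrowAct_apply]
  rw [(T.tr_invOn y).1.eq (T.act_mapsTo _ hb'), T.act_comp _ _ _ hb']
  simp

def globalAction : PartialAction G B where
  D := fun {_ z} _ => T.J z
  act := T.arrowAct
  ideal_base := T.J_ideal
  ideal_dom := fun {_ z} _ => (T.J_ideal z).mono subset_rfl (Set.subset_univ _)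
  act_mem := fun g _ hb => (T.arrowAct_bijOn g).mapsTo hb
  act_add := fun g a ha b hb => (T.arrowAct_ringHomOn g a ha b hb).1
  act_mul := fun g a ha b hb => (T.arrowAct_ringHomOn g a ha b hb).2
  act_inj := fun g _ ha _ hb hab => (T.arrowAct_bijOn g).injOn ha hb hab
  act_surj := fun g _ hc => (T.arrowAct_bijOn g).surjOn hc
  act_id := fun z _ hb => T.arrowAct_id z hb
  mem_comp := fun _ _ _ ha _ => ha
  act_comp := fun g h _ ha _ => T.arrowAct_comp h g ha

/-- Hypotheses (C1)–(C3) of the paper, relating `T` to `θ` seen inside `B` through `ι`. -/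
structure Extends {A : Type u} [NonUnitalRing A] (θ : PartialAction G A) (ι : A → B) : Prop where
  ι_injective : Function.Injective ι
  τ_isTotal : ∀ y, θ.IsTotal (T.τ y)
  image_subset : ∀ y, ι '' θ.D (𝟙 y) ⊆ T.J y
  image_D_vertex : ∀ h : x ⟶ x, ι '' θ.D h = ι '' θ.D (𝟙 x) ∩ T.act h '' (ι '' θ.D (𝟙 x))
  act_ι : ∀ h : x ⟶ x, ∀ a ∈ θ.D (Groupoid.inv h), T.act h (ι a) = ι (θ.act h a)
  J_x_eq_closure : T.J x = AddSubgroup.closure (⋃ h : x ⟶ x, T.act h '' (ι '' θ.D (𝟙 x)))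
  tr_ι : ∀ y, ∀ a ∈ θ.D (𝟙 x), T.tr y (ι a) = ι (θ.act (T.τ y) a)

namespace Extends

variable {T} {A : Type u} [NonUnitalRing A] {θ : PartialAction G A} {ι : A → B}

theorem trInv_ι_act_τ (hT : T.Extends θ ι) (y : G) {c : A} (hc : c ∈ θ.D (𝟙 x)) :
    T.trInv y (ι (θ.act (T.τ y) c)) = ι c := by
  rw [← hT.tr_ι y c hc]
  exact (T.tr_invOn y).1.eq (hT.image_subset x ⟨c, hc, rfl⟩)

theorem arrowAct_ι (hT : T.Extends θ ι) {y z : G} (g : y ⟶ z) {a : A}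
    (ha : a ∈ θ.D (Groupoid.inv g)) : T.arrowAct g (ι a) = ι (θ.act g a) := by
  obtain ⟨c, hc, rfl⟩ := (hT.τ_isTotal y).exists_act_eq (θ.D_subset _ ha)
  have hc' := (θ.act_mem_D_inv_iff_conj (hT.τ_isTotal y) (hT.τ_isTotal z) g hc).1 ha
  rw [θ.act_act_conj (hT.τ_isTotal y) (hT.τ_isTotal z) g hc', arrowAct_apply,
    hT.trInv_ι_act_τ y hc, hT.act_ι _ c hc', hT.tr_ι z _ (θ.D_subset _ (θ.act_mem _ c hc'))]

theorem image_D_eq (hT : T.Extends θ ι) {y z : G} (g : y ⟶ z) :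
    ι '' θ.D g = ι '' θ.D (𝟙 z) ∩ T.arrowAct g '' (ι '' θ.D (𝟙 y)) := by
  have hτy := hT.τ_isTotal y
  have hτz := hT.τ_isTotal z
  ext b
  constructor
  · rintro ⟨a, ha, rfl⟩
    obtain ⟨c, hc, rfl⟩ := θ.act_surj g a ha
    exact ⟨⟨_, θ.D_subset g ha, rfl⟩, ι c, ⟨c, θ.D_subset _ hc, rfl⟩, hT.arrowAct_ι g hc⟩
  · rintro ⟨⟨a, ha, rfl⟩, _, ⟨b, hb, rfl⟩, hab⟩
    obtain ⟨d, hd, rfl⟩ := hτz.exists_act_eq ha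
    obtain ⟨c, hc, rfl⟩ := hτy.exists_act_eq hb
    have hJx : ∀ e ∈ θ.D (𝟙 x), ι e ∈ T.J x := fun e he => hT.image_subset x ⟨e, he, rfl⟩
    have hcd : T.act (T.τ y ≫ g ≫ Groupoid.inv (T.τ z)) (ι c) = ι d := by
      refine (T.tr_bijOn z).injOn (T.act_mapsTo _ (hJx c hc)) (hJx d hd) ?_
      rwa [arrowAct_apply, hT.trInv_ι_act_τ y hc, ← hT.tr_ι z d hd] at hab
    obtain ⟨d', hd', hdd'⟩ : ι d ∈ ι '' θ.D (T.τ y ≫ g ≫ Groupoid.inv (T.τ z)) := by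
      rw [hT.image_D_vertex]
      exact ⟨⟨d, hd, rfl⟩, ι c, ⟨c, hc, rfl⟩, hcd⟩
    rw [hT.ι_injective hdd'] at hd'
    obtain ⟨c', hc', rfl⟩ := θ.act_surj _ d hd'
    have hgc' := (θ.act_mem_D_inv_iff_conj hτy hτz g (θ.D_subset _ hc')).2 hc'
    exact ⟨_, θ.act_mem g _ hgc', by rw [θ.act_act_conj hτy hτz g hc']⟩

theorem J_eq_closure (hT : T.Extends θ ι) (z : G) :
    T.J z = AddSubgroup.closure (⋃ (w : G) (h : w ⟶ z), T.arrowAct h '' (ι '' θ.D (𝟙 w))) := by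
  set S := ⋃ h : x ⟶ x, T.act h '' (ι '' θ.D (𝟙 x))
  have hunion : (⋃ (w : G) (h : w ⟶ z), T.arrowAct h '' (ι '' θ.D (𝟙 w))) = T.tr z '' S := by
    ext b
    simp only [S, Set.mem_iUnion, Set.mem_image]
    constructor
    · rintro ⟨w, h, _, ⟨a, ha, rfl⟩, rfl⟩
      obtain ⟨c, hc, rfl⟩ := (hT.τ_isTotal w).exists_act_eq ha
      exact ⟨_, ⟨_, ι c, ⟨c, hc, rfl⟩, rfl⟩, by rw [arrowAct_apply, hT.trInv_ι_act_τ w hc]⟩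
    · -- `g_x = k` for `g = τ_z k τ_z⁻¹ ∈ 𝒢(z)`
      rintro ⟨_, ⟨k, _, ⟨c, hc, rfl⟩, rfl⟩, rfl⟩
      refine ⟨z, Groupoid.inv (T.τ z) ≫ k ≫ T.τ z, _,
        ⟨_, (hT.τ_isTotal z).act_mem hc, rfl⟩, ?_⟩
      rw [arrowAct_apply, hT.trInv_ι_act_τ z hc]
      simp
  have hSJ : (AddSubgroup.closure S : Set B) = T.J x := hT.J_x_eq_closure.symm
  rw [hunion]
  refine subset_antisymm ?_ ?_
  · calc T.J z = T.tr z '' AddSubgroup.closure S := by rw [hSJ, (T.tr_bijOn z).image_eq]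
      _ ⊆ AddSubgroup.closure (T.tr z '' S) :=
        AddSubgroup.image_closure_subset_closure_image fun a ha b hb =>
          (T.tr_ringHomOn z a (hSJ ▸ ha) b (hSJ ▸ hb)).1
  · refine (AddSubgroup.closure_le (K := (T.J_ideal z).toAddSubgroup)).2 ?_
    exact (Set.image_mono (hSJ ▸ AddSubgroup.subset_closure)).trans
      (T.tr_bijOn z).mapsTo.image_subset

end Extends

end TransportedVertexAction

theorem extension_partial_actions_stmt19_general
    {G : Type v} [Groupoid G] {A : Type u} [NonUnitalRing A]
    (x : G) (τ : ∀ y : G, x ⟶ y)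
    (θ : PartialAction G A)
    -- (C1): θ = Ext(γ) is of group type
    (hgt1 : ∀ y : G, θ.D (Groupoid.inv (τ y)) = θ.D (𝟙 x))
    (hgt2 : ∀ y : G, θ.D (τ y) = θ.D (𝟙 y))
    -- the ambient ring B of (C3), with an embedding ι of A
    {B : Type u} [NonUnitalRing B] (ι : A → B)
    (hι_inj : Function.Injective ι)
    (J : G → Set B)
    (hJ_ideal : ∀ y : G, IsIdealIn (J y) (Set.univ : Set B))
    (hIJ_ideal : ∀ y : G, IsIdealIn (ι '' θ.D (𝟙 y)) (J y))
    -- … and the globalization (J x, β̃) of γ_{(x)} = θ_{(x)} on I_x ⊆ J x (C2)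
    (β' : (x ⟶ x) → B → B)
    (hβ'_mem : ∀ h : x ⟶ x, ∀ b ∈ J x, β' h b ∈ J x)
    (hβ'_add : ∀ h : x ⟶ x, ∀ a ∈ J x, ∀ b ∈ J x, β' h (a + b) = β' h a + β' h b)
    (hβ'_mul : ∀ h : x ⟶ x, ∀ a ∈ J x, ∀ b ∈ J x, β' h (a * b) = β' h a * β' h b)
    (hβ'_one : ∀ b ∈ J x, β' (𝟙 x) b = b)
    (hβ'_comp : ∀ g h : x ⟶ x, ∀ b ∈ J x, β' g (β' h b) = β' (h ≫ g) b)
    (hβ'_res1 : ∀ h : x ⟶ x,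
      ι '' θ.D h = ι '' θ.D (𝟙 x) ∩ β' h '' (ι '' θ.D (𝟙 x)))
    (hβ'_res2 : ∀ h : x ⟶ x, ∀ a ∈ θ.D (Groupoid.inv h), β' h (ι a) = ι (θ.act h a))
    (hβ'_span : J x
      = ↑(AddSubgroup.closure (⋃ h : x ⟶ x, β' h '' (ι '' θ.D (𝟙 x)))))
    -- (C3): the isomorphisms γ̃_{τ_y} : J x → J y extending γ_{τ_y} = θ_{τ_y}
    (t' : G → B → B) (t'inv : G → B → B)
    (ht'_mem : ∀ y : G, ∀ b ∈ J x, t' y b ∈ J y)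
    (ht'_add : ∀ y : G, ∀ a ∈ J x, ∀ b ∈ J x, t' y (a + b) = t' y a + t' y b)
    (ht'_mul : ∀ y : G, ∀ a ∈ J x, ∀ b ∈ J x, t' y (a * b) = t' y a * t' y b)
    (ht'inv_mem : ∀ y : G, ∀ b ∈ J y, t'inv y b ∈ J x)
    (ht'_rightinv : ∀ y : G, ∀ b ∈ J y, t' y (t'inv y b) = b)
    (ht'_leftinv : ∀ y : G, ∀ b ∈ J x, t'inv y (t' y b) = b)
    (ht'_res : ∀ y : G, ∀ a ∈ θ.D (𝟙 x), t' y (ι a) = ι (θ.act (τ y) a)) :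
    ∃ β : PartialAction G B,
      -- β is the announced global action: C_g = J_{t g} and
      -- β_g = γ̃_{τ_{t g}} ∘ γ̃_{g_x} ∘ γ̃_{τ_{s g}}⁻¹
      (∀ {y z : G} (g : y ⟶ z), β.D g = J z) ∧
      (∀ {y z : G} (g : y ⟶ z), ∀ b ∈ J y,
        β.act g b = t' z (β' (τ y ≫ g ≫ Groupoid.inv (τ z)) (t'inv y b))) ∧
      -- and it is a globalization of θ:
      (∀ y : G, IsIdealIn (ι '' θ.D (𝟙 y)) (β.D (𝟙 y))) ∧
      (∀ {y z : G} (g : y ⟶ z),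
        ι '' θ.D g = ι '' θ.D (𝟙 z) ∩ β.act g '' (ι '' θ.D (𝟙 y))) ∧
      (∀ {y z : G} (g : y ⟶ z), ∀ a ∈ θ.D (Groupoid.inv g),
        β.act g (ι a) = ι (θ.act g a)) ∧
      (∀ z : G, β.D (𝟙 z)
        = ↑(AddSubgroup.closure
            (⋃ (w : G) (h : w ⟶ z), β.act h '' (ι '' θ.D (𝟙 w))))) := by
  let T : TransportedVertexAction G B x :=
    { J, τ, J_ideal := hJ_ideal
      act := β'
      act_mapsTo := fun h b hb => hβ'_mem h b hb
      act_ringHomOn := fun h a ha b hb => ⟨hβ'_add h a ha b hb, hβ'_mul h a ha b hb⟩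
      act_id := hβ'_one
      act_comp := hβ'_comp
      tr := t'
      trInv := t'inv
      tr_mapsTo := fun y b hb => ht'_mem y b hb
      trInv_mapsTo := fun y b hb => ht'inv_mem y b hb
      tr_ringHomOn := fun y a ha b hb => ⟨ht'_add y a ha b hb, ht'_mul y a ha b hb⟩
      tr_invOn := fun y => ⟨ht'_leftinv y, ht'_rightinv y⟩ }
  have hT : T.Extends θ ι :=
    { ι_injective := hι_inj
      τ_isTotal := fun y => ⟨hgt2 y, hgt1 y⟩
      image_subset := fun y => (hIJ_ideal y).1
      image_D_vertex := hβ'_res1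
      act_ι := hβ'_res2
      J_x_eq_closure := hβ'_span
      tr_ι := ht'_res }
  exact ⟨T.globalAction, fun _ => rfl, fun _ _ _ => rfl, hIJ_ideal, hT.image_D_eq,
    fun g _ ha => hT.arrowAct_ι g ha, hT.J_eq_closure⟩

theorem extension_partial_actions_stmt19
    {G : Type v} [Groupoid G] {A : Type u} [NonUnitalRing A]
    (hconn : ∀ a b : G, Nonempty (a ⟶ b))
    (x : G) (τ : ∀ y : G, x ⟶ y) (hτx : τ x = 𝟙 x)
    (θ : PartialAction G A)
    -- (C1): θ = Ext(γ) is of group type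
    (hgt1 : ∀ y : G, θ.D (Groupoid.inv (τ y)) = θ.D (𝟙 x))
    (hgt2 : ∀ y : G, θ.D (τ y) = θ.D (𝟙 y))
    -- (C2): I_x is unital …
    (hIxunital : ∃ u ∈ θ.D (𝟙 x), ∀ a ∈ θ.D (𝟙 x), u * a = a ∧ a * u = a)
    -- the ambient ring B of (C3), with an embedding ι of A
    {B : Type u} [NonUnitalRing B] (ι : A → B)
    (hι_inj : Function.Injective ι)
    (hι_add : ∀ a b : A, ι (a + b) = ι a + ι b)
    (hι_mul : ∀ a b : A, ι (a * b) = ι a * ι b)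
    (J : G → Set B)
    (hJ_ideal : ∀ y : G, IsIdealIn (J y) (Set.univ : Set B))
    (hIJ_ideal : ∀ y : G, IsIdealIn (ι '' θ.D (𝟙 y)) (J y))
    -- … and the globalization (J x, β̃) of γ_{(x)} = θ_{(x)} on I_x ⊆ J x (C2)
    (β' : (x ⟶ x) → B → B)
    (hβ'_mem : ∀ h : x ⟶ x, ∀ b ∈ J x, β' h b ∈ J x)
    (hβ'_add : ∀ h : x ⟶ x, ∀ a ∈ J x, ∀ b ∈ J x, β' h (a + b) = β' h a + β' h b)
    (hβ'_mul : ∀ h : x ⟶ x, ∀ a ∈ J x, ∀ b ∈ J x, β' h (a * b) = β' h a * β' h b)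
    (hβ'_bij : ∀ h : x ⟶ x, Set.BijOn (β' h) (J x) (J x))
    (hβ'_one : ∀ b ∈ J x, β' (𝟙 x) b = b)
    (hβ'_comp : ∀ g h : x ⟶ x, ∀ b ∈ J x, β' g (β' h b) = β' (h ≫ g) b)
    (hβ'_res1 : ∀ h : x ⟶ x,
      ι '' θ.D h = ι '' θ.D (𝟙 x) ∩ β' h '' (ι '' θ.D (𝟙 x)))
    (hβ'_res2 : ∀ h : x ⟶ x, ∀ a ∈ θ.D (Groupoid.inv h), β' h (ι a) = ι (θ.act h a))
    (hβ'_span : J x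
      = ↑(AddSubgroup.closure (⋃ h : x ⟶ x, β' h '' (ι '' θ.D (𝟙 x)))))
    -- (C3): the isomorphisms γ̃_{τ_y} : J x → J y extending γ_{τ_y} = θ_{τ_y}
    (t' : G → B → B) (t'inv : G → B → B)
    (ht'_mem : ∀ y : G, ∀ b ∈ J x, t' y b ∈ J y)
    (ht'_add : ∀ y : G, ∀ a ∈ J x, ∀ b ∈ J x, t' y (a + b) = t' y a + t' y b)
    (ht'_mul : ∀ y : G, ∀ a ∈ J x, ∀ b ∈ J x, t' y (a * b) = t' y a * t' y b)
    (ht'inv_mem : ∀ y : G, ∀ b ∈ J y, t'inv y b ∈ J x)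
    (ht'_rightinv : ∀ y : G, ∀ b ∈ J y, t' y (t'inv y b) = b)
    (ht'_leftinv : ∀ y : G, ∀ b ∈ J x, t'inv y (t' y b) = b)
    (ht'_res : ∀ y : G, ∀ a ∈ θ.D (𝟙 x), t' y (ι a) = ι (θ.act (τ y) a)) :
    ∃ β : PartialAction G B,
      -- β is the announced global action: C_g = J_{t g} and
      -- β_g = γ̃_{τ_{t g}} ∘ γ̃_{g_x} ∘ γ̃_{τ_{s g}}⁻¹
      (∀ {y z : G} (g : y ⟶ z), β.D g = J z) ∧
      (∀ {y z : G} (g : y ⟶ z), ∀ b ∈ J y,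
        β.act g b = t' z (β' (τ y ≫ g ≫ Groupoid.inv (τ z)) (t'inv y b))) ∧
      -- and it is a globalization of θ:
      (∀ y : G, IsIdealIn (ι '' θ.D (𝟙 y)) (β.D (𝟙 y))) ∧
      (∀ {y z : G} (g : y ⟶ z),
        ι '' θ.D g = ι '' θ.D (𝟙 z) ∩ β.act g '' (ι '' θ.D (𝟙 y))) ∧
      (∀ {y z : G} (g : y ⟶ z), ∀ a ∈ θ.D (Groupoid.inv g),
        β.act g (ι a) = ι (θ.act g a)) ∧
      (∀ z : G, β.D (𝟙 z)
        = ↑(AddSubgroup.closure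
            (⋃ (w : G) (h : w ⟶ z), β.act h '' (ι '' θ.D (𝟙 w))))) :=
  extension_partial_actions_stmt19_general x τ θ hgt1 hgt2 ι hι_inj J hJ_ideal hIJ_ideal β' hβ'_mem
    hβ'_add hβ'_mul hβ'_one hβ'_comp hβ'_res1 hβ'_res2 hβ'_span t' t'inv ht'_mem ht'_add ht'_mul
    ht'inv_mem ht'_rightinv ht'_leftinv ht'_res
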